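/- Let M₃ denote the five-element modular nondistributive lattice. If L is a finite lattice whose set of nonzero join-irreducible elements is the union of two chains, then M₃ is not a sublattice of L. -/

import Mathlib

/-!
Take join-irreducibles `x ≤ a`, `y ≤ b`, `z ≤ c` lying outside the common meet `m` of the
atoms `a, b, c` of a copy of `M₃`. Any comparability, say `x ≤ y`, would put `x` below
`a ⊓ b = m`; so `x, y, z` are pairwise incomparable, and two chains cannot cover them.
-/

theorem exists_supIrred_le_not_le {L : Type*} [Lattice L] [WellFoundedLT L] {a m : L}
    (ha : ¬a ≤ m) : ∃ x, SupIrred x ∧ x ≤ a ∧ ¬x ≤ m := by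
  induction a using WellFoundedLT.induction with
  | ind a ih =>
    by_cases hirr : SupIrred a
    · exact ⟨a, hirr, le_rfl, ha⟩
    rcases not_supIrred.mp hirr with hmin | ⟨b, c, rfl, hb, hc⟩
    · exact absurd (hmin.eq_of_le inf_le_left ▸ inf_le_right) ha
    by_cases hbm : b ≤ m
    · have hcm : ¬c ≤ m := fun hcm => ha (sup_le hbm hcm)
      obtain ⟨x, hx, hxc, hxm⟩ := ih c hc hcm
      exact ⟨x, hx, hxc.trans le_sup_right, hxm⟩
    · obtain ⟨x, hx, hxb, hxm⟩ := ih b hb hbm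
      exact ⟨x, hx, hxb.trans le_sup_left, hxm⟩

theorem incompRel_of_not_le_of_inf_le {L : Type*} [SemilatticeInf L] {x y a b m : L}
    (hxa : x ≤ a) (hyb : y ≤ b) (hab : a ⊓ b ≤ m) (hx : ¬x ≤ m) (hy : ¬y ≤ m) :
    IncompRel (· ≤ ·) x y :=
  ⟨fun hxy => hx ((le_inf hxa (hxy.trans hyb)).trans hab),
    fun hyx => hy ((le_inf (hyx.trans hxa) hyb).trans hab)⟩

theorem IsChain.not_incompRel {α : Type*} [Preorder α] {C : Set α} {u v : α}
    (hC : IsChain (· ≤ ·) C) (hu : u ∈ C) (hv : v ∈ C) : ¬IncompRel (· ≤ ·) u v :=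
  fun h => (hC.total hu hv).elim h.1 h.2

theorem not_pairwise_incompRel_of_mem_union_of_isChain {α : Type*} [Preorder α]
    {C₁ C₂ : Set α} (h₁ : IsChain (· ≤ ·) C₁) (h₂ : IsChain (· ≤ ·) C₂) {x y z : α}
    (hx : x ∈ C₁ ∪ C₂) (hy : y ∈ C₁ ∪ C₂) (hz : z ∈ C₁ ∪ C₂) :
    ¬(IncompRel (· ≤ ·) x y ∧ IncompRel (· ≤ ·) x z ∧ IncompRel (· ≤ ·) y z) := by
  rintro ⟨hxy, hxz, hyz⟩
  rcases hx with hx | hx <;> rcases hy with hy | hy <;> rcases hz with hz | hz <;>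
    first
    | exact h₁.not_incompRel hx hy hxy | exact h₂.not_incompRel hx hy hxy
    | exact h₁.not_incompRel hx hz hxz | exact h₂.not_incompRel hx hz hxz
    | exact h₁.not_incompRel hy hz hyz | exact h₂.not_incompRel hy hz hyz

/-- If the set of (nonzero) join-irreducible elements of a finite
lattice `L` is the union of two chains, then `M₃` is not a sublattice of `L`. -/
theorem no_M3_of_join_irreducibles_union_two_chains {L : Type*} [Lattice L]
    [Fintype L]
    (C₁ C₂ : Set L) (h₁ : IsChain (· ≤ ·) C₁) (h₂ : IsChain (· ≤ ·) C₂)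
    (hJ : {a : L | SupIrred a} = C₁ ∪ C₂) :
    ¬ ∃ a b c : L, a ≠ b ∧ a ≠ c ∧ b ≠ c ∧
        a ⊓ b = a ⊓ c ∧ a ⊓ b = b ⊓ c ∧
        a ⊔ b = a ⊔ c ∧ a ⊔ b = b ⊔ c ∧
        a ⊓ b < a ∧ a ⊓ b < b ∧ a ⊓ b < c ∧
        a < a ⊔ b ∧ b < a ⊔ b ∧ c < a ⊔ b := by
  rintro ⟨a, b, c, -, -, -, hac, hbc, -, -, hma, hmb, hmc, -, -, -⟩
  obtain ⟨x, hx, hxa, hxm⟩ := exists_supIrred_le_not_le hma.not_ge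
  obtain ⟨y, hy, hyb, hym⟩ := exists_supIrred_le_not_le hmb.not_ge
  obtain ⟨z, hz, hzc, hzm⟩ := exists_supIrred_le_not_le hmc.not_ge
  have mem_union {u : L} (hu : SupIrred u) : u ∈ C₁ ∪ C₂ := hJ ▸ hu
  exact not_pairwise_incompRel_of_mem_union_of_isChain h₁ h₂ (mem_union hx) (mem_union hy)
    (mem_union hz)
    ⟨incompRel_of_not_le_of_inf_le hxa hyb le_rfl hxm hym,
      incompRel_of_not_le_of_inf_le hxa hzc hac.ge hxm hzm,
      incompRel_of_not_le_of_inf_le hyb hzc hbc.ge hym hzm⟩
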